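/- Let F : ℂ → ℂ be holomorphic near ξ₀ and (z,t) ∈ ℂ×ℝ. Define G(ξ) = F(ξ) − ½(z − 2tξ − z̄ξ²). Then G(ξ₀) = 0 and G'(ξ₀) = 0 hold for some (z,t) ∈ ℂ×ℝ if and only if Im[(1+ξξ̄)² ∂(F/(1+ξξ̄)²)]|_{ξ₀} = 0 (the point (ξ₀, F(ξ₀)) is Lagrangian), where ∂ is the Wirtinger derivative in ξ. -/

import Mathlib

/-!
Since `∂ ((1 + ξξ̄)²) = 2 (1 + ξξ̄) ξ̄`, the product rule applied to `F = (1 + ξξ̄)² · (F / (1 + ξξ̄)²)`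
shows that the Lagrangian quantity equals `F'(ξ₀) - 2 ξ̄₀ F(ξ₀) / (1 + ξ₀ξ̄₀)`. The conditions
`G(ξ₀) = G'(ξ₀) = 0` say that the quadratic `½ (z - 2tξ - z̄ξ²)` has 1-jet `(F(ξ₀), F'(ξ₀))` at `ξ₀`.
As `(z, t)` ranges over `ℂ × ℝ`, these jets `(a, b)` are exactly those with
`b - 2 ξ̄₀ a / (1 + ξ₀ξ̄₀)` real: one inclusion is a direct computation, and for the other
`r = -(b - 2 ξ̄₀ a / (1 + ξ₀ξ̄₀))` gives the explicit solution
`z = (2 (a - ā ξ₀²) + 2 ξ₀ (1 + ξ₀ξ̄₀) r) / (1 + ξ₀ξ̄₀)²`,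
`t = (-2 (a ξ̄₀ + ā ξ₀) + (1 - ξ₀²ξ̄₀²) r) / (1 + ξ₀ξ̄₀)²`.
-/

open Complex ComplexConjugate

/-- Wirtinger derivative ∂/∂ξ of a function ℂ → ℂ. -/
noncomputable def wd (f : ℂ → ℂ) (ν : ℂ) : ℂ :=
  (fderiv ℝ f ν 1 - Complex.I * fderiv ℝ f ν Complex.I) / 2

section Wirtinger

variable {u v : ℂ → ℂ} {ν : ℂ}

lemma wd_const_add (c : ℂ) : wd (fun ξ => c + u ξ) ν = wd u ν := by
  simp only [wd, fderiv_const_add]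

lemma wd_mul (hu : DifferentiableAt ℝ u ν) (hv : DifferentiableAt ℝ v ν) :
    wd (fun ξ => u ξ * v ξ) ν = wd u ν * v ν + u ν * wd v ν := by
  simp only [wd, fderiv_fun_mul hu hv, add_apply, smul_apply, smul_eq_mul]
  ring

lemma wd_pow (hu : DifferentiableAt ℝ u ν) (n : ℕ) :
    wd (fun ξ => u ξ ^ n) ν = n * u ν ^ (n - 1) * wd u ν := by
  simp only [wd, fderiv_fun_pow n hu, smul_apply, nsmul_eq_mul, smul_eq_mul]
  ring

lemma wd_id : wd (fun ξ => ξ) ν = 1 := by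
  simp [wd]

lemma wd_conj : wd (fun ξ => conj ξ) ν = 0 := by
  rw [wd, show (fun ξ : ℂ => conj ξ) = conjCLE from rfl, ContinuousLinearEquiv.fderiv]
  simp

lemma wd_eq_deriv (hu : DifferentiableAt ℂ u ν) : wd u ν = deriv u ν := by
  have hI : fderiv ℂ u ν I = I * deriv u ν := by simp
  rw [wd, (hu.hasFDerivAt.restrictScalars ℝ).fderiv, ContinuousLinearMap.coe_restrictScalars',
    fderiv_apply_one_eq_deriv, hI, ← mul_assoc, I_mul_I]
  ring

end Wirtinger

lemma one_add_mul_conj_ne_zero (ν : ℂ) : 1 + ν * conj ν ≠ 0 := by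
  rw [mul_conj]
  exact_mod_cast (add_pos_of_pos_of_nonneg one_pos (normSq_nonneg ν)).ne'

lemma conj_one_add_mul_conj (ν : ℂ) : conj (1 + ν * conj ν) = 1 + ν * conj ν := by
  simp [mul_comm]

lemma wd_one_add_mul_conj_sq (ν : ℂ) :
    wd (fun ξ => (1 + ξ * conj ξ) ^ 2) ν = 2 * (1 + ν * conj ν) * conj ν := by
  have hconj : DifferentiableAt ℝ (fun ξ : ℂ => conj ξ) ν := differentiable_conj ν
  rw [wd_pow (by fun_prop), wd_const_add, wd_mul differentiableAt_fun_id hconj, wd_id, wd_conj]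
  push_cast
  ring

lemma one_add_mul_conj_sq_mul_wd_div {F : ℂ → ℂ} {ν : ℂ} (hF : DifferentiableAt ℂ F ν) :
    (1 + ν * conj ν) ^ 2 * wd (fun ξ => F ξ / (1 + ξ * conj ξ) ^ 2) ν
      = deriv F ν - 2 * conj ν * F ν / (1 + ν * conj ν) := by
  have hd := one_add_mul_conj_ne_zero ν
  have hq : DifferentiableAt ℝ (fun ξ : ℂ => (1 + ξ * conj ξ) ^ 2) ν := by fun_prop
  have hf : DifferentiableAt ℝ (fun ξ => F ξ / (1 + ξ * conj ξ) ^ 2) ν := by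
    simp only [div_eq_mul_inv]
    exact hF.restrictScalars ℝ |>.mul (hq.inv (pow_ne_zero 2 hd))
  have hprod : wd F ν = wd (fun ξ => (1 + ξ * conj ξ) ^ 2 * (F ξ / (1 + ξ * conj ξ) ^ 2)) ν := by
    congr 1
    funext ξ
    field_simp [one_add_mul_conj_ne_zero ξ]
  rw [wd_mul hq hf, wd_one_add_mul_conj_sq, wd_eq_deriv hF] at hprod
  rw [hprod]
  field_simp
  ring

lemma deriv_sub_quadratic {F : ℂ → ℂ} {ν : ℂ} (hF : DifferentiableAt ℂ F ν) (z w c : ℂ) :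
    deriv (fun ξ => F ξ - (z - 2 * w * ξ - c * ξ ^ 2) / 2) ν = deriv F ν + w + c * ν := by
  have hquad : HasDerivAt (fun ξ => (z - 2 * w * ξ - c * ξ ^ 2) / 2) (-w - c * ν) ν :=
    (((hasDerivAt_id' ν).const_mul (2 * w)).const_sub z |>.fun_sub
      ((hasDerivAt_pow 2 ν).const_mul c)).div_const 2 |>.congr_deriv (by push_cast; ring)
  rw [(hF.hasDerivAt.fun_sub hquad).deriv]
  ring

lemma exists_quadratic_jet_iff (a b ξ : ℂ) :
    (∃ (z : ℂ) (t : ℝ),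
        a - (z - 2 * t * ξ - conj z * ξ ^ 2) / 2 = 0 ∧ b + t + conj z * ξ = 0) ↔
      (b - 2 * conj ξ * a / (1 + ξ * conj ξ)).im = 0 := by
  have hd := one_add_mul_conj_ne_zero ξ
  have hdc := conj_one_add_mul_conj ξ
  set d := 1 + ξ * conj ξ with hd_def
  rw [← conj_eq_iff_im]
  constructor
  · rintro ⟨z, t, ha, hb⟩
    have key : b - 2 * conj ξ * a / d = (t * (d - 2) - (conj z * ξ + z * conj ξ)) / d := by
      rw [sub_div' hd]
      congr 1
      linear_combination d * hb - 2 * conj ξ * ha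
    rw [key]
    simp only [map_div₀, map_sub, map_add, map_mul, conj_ofReal, conj_conj, hdc, map_ofNat]
    ring
  · intro him
    obtain ⟨r, hr, rfl⟩ : ∃ r, conj r = r ∧ b = 2 * conj ξ * a / d - r :=
      ⟨-(b - 2 * conj ξ * a / d), by rw [map_neg, him], by ring⟩
    set T := (-2 * (a * conj ξ + conj a * ξ) + (1 - ξ ^ 2 * conj ξ ^ 2) * r) / d ^ 2
    have hT : conj T = T := by
      simp only [T, map_div₀, map_pow, hdc, map_add, map_mul, map_sub, map_neg,
        map_one, map_ofNat, conj_conj, hr]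
      ring
    refine ⟨(2 * (a - conj a * ξ ^ 2) + 2 * ξ * d * r) / d ^ 2, T.re, ?_, ?_⟩ <;>
    · simp only [conj_eq_iff_re.mp hT, T, map_div₀, map_pow, hdc, map_add,
        map_mul, map_sub, map_ofNat, conj_conj, hr]
      field_simp
      rw [hd_def]
      ring

/-- Let F be holomorphic near ξ₀ and G(ξ) = F(ξ) − ½(z − 2tξ − z̄ξ²).
Then G(ξ₀) = 0 and G'(ξ₀) = 0 hold for some (z,t) ∈ ℂ × ℝ iff
Im[(1+ξξ̄)²·∂(F/(1+ξξ̄)²)] vanishes at ξ₀, i.e. the point (ξ₀, F(ξ₀)) is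
Lagrangian. -/
theorem stmt19 (F : ℂ → ℂ) (ξ₀ : ℂ) (V : Set ℂ) (hV : V ∈ nhds ξ₀)
    (hF : DifferentiableOn ℂ F V) :
    (∃ (z : ℂ) (t : ℝ),
        F ξ₀ - (z - 2 * (t : ℂ) * ξ₀ - conj z * ξ₀^2) / 2 = 0 ∧
        deriv (fun ξ => F ξ - (z - 2 * (t : ℂ) * ξ - conj z * ξ^2) / 2) ξ₀ = 0) ↔
      ((1 + ξ₀ * conj ξ₀)^2 * wd (fun ξ => F ξ / (1 + ξ * conj ξ)^2) ξ₀).im = 0 := by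
  have hFa : DifferentiableAt ℂ F ξ₀ := hF.differentiableAt hV
  simp only [deriv_sub_quadratic hFa, one_add_mul_conj_sq_mul_wd_div hFa]
  exact exists_quadratic_jet_iff (F ξ₀) (deriv F ξ₀) ξ₀
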